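/- Let g : ℝ → ℝ be a continuous function that is periodic with period τ > 0, and let M = (1/τ) ∫₀^τ g(s) ds be its mean over one period. Then lim_{T→∞} (1/T³) ∫₀ᵀ t² g(t) dt = M/3. -/
import Mathlib


open MeasureTheory Filter

theorem cubic_weighted_periodic_average (g : ℝ → ℝ) (hg : Continuous g)
    (τ : ℝ) (hτ : 0 < τ) (hper : Function.Periodic g τ)
    (M : ℝ) (hM : M = (1 / τ) * ∫ s in (0:ℝ)..τ, g s) :
    Tendsto (fun T : ℝ => (1 / T ^ 3) * ∫ t in (0:ℝ)..T, t ^ 2 * g t)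
      atTop (nhds (M / 3)) := by
  set G : ℝ → ℝ := fun t => ∫ s in (0:ℝ)..t, g s with hGdef
  have hGderiv : ∀ t : ℝ, HasDerivAt G (g t) t := fun t =>
    (hg.integral_hasStrictDerivAt 0 t).hasDerivAt
  have hGcont : Continuous G := by
    apply continuous_iff_continuousAt.2
    exact fun t => (hGderiv t).continuousAt
  -- h = G - M t is periodic
  set h : ℝ → ℝ := fun t => G t - M * t with hhdef
  have hint : ∀ a b : ℝ, IntervalIntegrable g volume a b := fun a b =>
    hg.intervalIntegrable a b
  have hMτ : ∫ s in (0:ℝ)..τ, g s = M * τ := by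
    rw [hM]; field_simp
  have hh_per : Function.Periodic h τ := by
    intro t
    simp only [hhdef, hGdef]
    have : (∫ s in (0:ℝ)..(t + τ), g s) = (∫ s in (0:ℝ)..t, g s) + ∫ s in t..(t+τ), g s := by
      rw [intervalIntegral.integral_add_adjacent_intervals (hint 0 t) (hint t (t+τ))]
    rw [this, hper.intervalIntegral_add_eq t 0]
    simp only [zero_add]
    rw [hMτ]; ring
  have hh_cont : Continuous h := hGcont.sub (continuous_const.mul continuous_id)
  -- bound on h
  obtain ⟨C, hC⟩ : ∃ C : ℝ, ∀ t : ℝ, |h t| ≤ C := by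
    obtain ⟨C, hC⟩ := (isCompact_Icc (a := (0:ℝ)) (b := τ)).exists_bound_of_continuousOn
      hh_cont.continuousOn
    refine ⟨C, fun t => ?_⟩
    obtain ⟨y, hy, hty⟩ := hh_per.exists_mem_Ico₀ hτ t
    rw [hty]
    simpa using hC y ⟨hy.1, hy.2.le⟩
  have hCnn : 0 ≤ C := le_trans (abs_nonneg _) (hC 0)
  -- integration by parts on [0, T]
  have key : ∀ T : ℝ, (∫ t in (0:ℝ)..T, t ^ 2 * g t)
      = T ^ 2 * (M * T + h T) - (2 * M / 3) * T ^ 3 - ∫ t in (0:ℝ)..T, 2 * t * h t := by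
    intro T
    have hu : ∀ x ∈ Set.uIcc (0:ℝ) T, HasDerivAt (fun t : ℝ => t ^ 2) (2 * x) x := by
      intro x _
      simpa using (hasDerivAt_pow 2 x)
    have hv : ∀ x ∈ Set.uIcc (0:ℝ) T, HasDerivAt G (g x) x := fun x _ => hGderiv x
    have hparts := intervalIntegral.integral_mul_deriv_eq_deriv_mul hu hv
      ((continuous_const.mul continuous_id).intervalIntegrable 0 T) (hint 0 T)
    have hG0 : G 0 = 0 := intervalIntegral.integral_same
    have hGT : G T = M * T + h T := by simp [hhdef]
    have hsplit : (∫ t in (0:ℝ)..T, 2 * t * G t)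
        = (∫ t in (0:ℝ)..T, 2 * M * t ^ 2) + ∫ t in (0:ℝ)..T, 2 * t * h t := by
      rw [← intervalIntegral.integral_add]
      · congr 1; ext t; simp [hhdef]; ring
      · exact ((continuous_const.mul (continuous_pow 2)).intervalIntegrable 0 T)
      · exact (((continuous_const.mul continuous_id).mul hh_cont).intervalIntegrable 0 T)
    have hpoly : (∫ t in (0:ℝ)..T, 2 * M * t ^ 2) = (2 * M / 3) * T ^ 3 := by
      rw [intervalIntegral.integral_const_mul, integral_pow]
      ring
    rw [hparts, hG0, hGT, hsplit, hpoly]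
    ring
  -- rewrite the function for T > 0
  have heq : ∀ᶠ T : ℝ in atTop,
      (1 / T ^ 3) * (∫ t in (0:ℝ)..T, t ^ 2 * g t)
      = M / 3 + h T / T - (1 / T ^ 3) * ∫ t in (0:ℝ)..T, 2 * t * h t := by
    filter_upwards [eventually_gt_atTop (0:ℝ)] with T hT
    rw [key T]
    field_simp
    ring
  rw [Filter.tendsto_congr' heq]
  have hdiv : ∀ c : ℝ, Tendsto (fun T : ℝ => c / T) atTop (nhds 0) := fun c =>
    tendsto_const_nhds.div_atTop tendsto_id
  have h1 : Tendsto (fun T : ℝ => h T / T) atTop (nhds 0) := by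
    apply squeeze_zero_norm' (a := fun T : ℝ => C / T) _ (hdiv C)
    filter_upwards [eventually_gt_atTop (0:ℝ)] with T hT
    rw [norm_div, Real.norm_eq_abs, Real.norm_eq_abs, abs_of_pos hT]
    gcongr
    exact hC T
  have h2 : Tendsto (fun T : ℝ => (1 / T ^ 3) * ∫ t in (0:ℝ)..T, 2 * t * h t)
      atTop (nhds 0) := by
    apply squeeze_zero_norm' (a := fun T : ℝ => 2 * C / T) _ (hdiv (2 * C))
    filter_upwards [eventually_gt_atTop (0:ℝ)] with T hT
    have hbound : ∀ x ∈ Set.uIoc (0:ℝ) T, ‖2 * x * h x‖ ≤ 2 * T * C := by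
      intro x hx
      rw [Set.uIoc_of_le hT.le] at hx
      have h1 : |2 * x * h x| = 2 * |x| * |h x| := by
        rw [abs_mul, abs_mul]; simp
      rw [Real.norm_eq_abs, h1, abs_of_nonneg hx.1.le]
      have := hC x
      nlinarith [abs_nonneg (h x), hx.2, hx.1.le]
    have hle := intervalIntegral.norm_integral_le_of_norm_le_const hbound
    rw [norm_mul, Real.norm_eq_abs (1 / T ^ 3),
      abs_of_pos (by positivity : (0:ℝ) < 1 / T ^ 3)]
    calc 1 / T ^ 3 * ‖∫ t in (0:ℝ)..T, 2 * t * h t‖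
        ≤ 1 / T ^ 3 * (2 * T * C * |T - 0|) := by
          apply mul_le_mul_of_nonneg_left hle (by positivity)
      _ = 2 * C / T := by
          rw [sub_zero, abs_of_pos hT]; field_simp
  have hfinal : Tendsto
      (fun T : ℝ => M / 3 + h T / T - (1 / T ^ 3) * ∫ t in (0:ℝ)..T, 2 * t * h t)
      atTop (nhds (M / 3 + 0 - 0)) := (tendsto_const_nhds.add h1).sub h2
  simpa using hfinal
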